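/- The Kimura metric admits no homothetic vector: if ξ is a vector field on {r>0, 0<θ<π} satisfying £_ξ g = c · g for the Kimura metric g with c a constant, then c = 0 (i.e., ξ is a Killing vector). -/

import Mathlib

noncomputable section

/-- Points of the 4-dimensional coordinate domain. -/
abbrev Pt : Type := Fin 4 → ℝ

/-- A (real) vector field, given by its coordinate components. -/
abbrev Vec : Type := Pt → Fin 4 → ℝ

/-- Directional derivative of a scalar along a vector field (Lie derivative of a function). -/
def dd (X : Vec) (f : Pt → ℝ) (p : Pt) : ℝ := fderiv ℝ f p (X p)

/-- Coordinate partial derivative `∂_μ`. -/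
def pd (μ : Fin 4) (f : Pt → ℝ) (p : Pt) : ℝ := fderiv ℝ f p (Pi.single μ 1)

/-- Lie bracket of vector fields, `[X,Y]^i = X^ν ∂_ν Y^i - Y^ν ∂_ν X^i`. -/
def lb (X Y : Vec) : Vec := fun p i =>
  fderiv ℝ (fun q => Y q i) p (X p) - fderiv ℝ (fun q => X q i) p (Y p)

/-- Coordinate components of the Lie derivative of a metric:
`(£_ξ g)_{μν} = ξ^σ ∂_σ g_{μν} + g_{σν} ∂_μ ξ^σ + g_{μσ} ∂_ν ξ^σ`. -/
def lieDg (ξ : Vec) (g : Pt → Fin 4 → Fin 4 → ℝ) (p : Pt) (μ ν : Fin 4) : ℝ :=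
  (∑ σ : Fin 4, ξ p σ * pd σ (fun q => g q μ ν) p)
  + (∑ σ : Fin 4, g p σ ν * pd μ (fun q => ξ q σ) p)
  + (∑ σ : Fin 4, g p μ σ * pd ν (fun q => ξ q σ) p)

/-- Pointwise value `g(X,Y)` of the metric on two vector fields. -/
def gVal (g : Pt → Fin 4 → Fin 4 → ℝ) (X Y : Vec) (p : Pt) : ℝ :=
  ∑ i : Fin 4, ∑ j : Fin 4, g p i j * X p i * Y p j

/-- The Kimura metric in coordinates (t,r,θ,φ) = (p 0, p 1, p 2, p 3):
`ds² = (r²/b) dt² - (1/(r²b²)) dr² - r² dθ² - r² sin²θ dφ²`. -/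
def kimura (b : ℝ) : Pt → Fin 4 → Fin 4 → ℝ := fun p =>
  ![![p 1 ^ 2 / b, 0, 0, 0],
    ![0, -(1 / (p 1 ^ 2 * b ^ 2)), 0, 0],
    ![0, 0, -(p 1 ^ 2), 0],
    ![0, 0, 0, -(p 1 ^ 2 * Real.sin (p 2) ^ 2)]]

namespace KimuraAux

/-- The coordinate domain. -/
def U : Set Pt := {p : Pt | 0 < p 1 ∧ 0 < p 2 ∧ p 2 < Real.pi}

lemma openU : IsOpen U := by
  have h1 : IsOpen {p : Pt | 0 < p 1} := isOpen_lt continuous_const (continuous_apply 1)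
  have h2 : IsOpen {p : Pt | 0 < p 2} := isOpen_lt continuous_const (continuous_apply 2)
  have h3 : IsOpen {p : Pt | p 2 < Real.pi} := isOpen_lt (continuous_apply 2) continuous_const
  exact h1.inter (h2.inter h3)

lemma diff_coord (ν : Fin 4) (p : Pt) : DifferentiableAt ℝ (fun q : Pt => q ν) p :=
  (ContinuousLinearMap.proj ν : Pt →L[ℝ] ℝ).differentiableAt

lemma pd_const (μ : Fin 4) (a : ℝ) (p : Pt) : pd μ (fun _ => a) p = 0 := by
  simp [pd]

lemma pd_coord (μ ν : Fin 4) (p : Pt) :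
    pd μ (fun q : Pt => q ν) p = if ν = μ then 1 else 0 := by
  have h : (fun q : Pt => q ν) = (ContinuousLinearMap.proj ν : Pt →L[ℝ] ℝ) := rfl
  rw [pd, h, ContinuousLinearMap.fderiv]
  simp [ContinuousLinearMap.proj_apply, Pi.single_apply]

lemma pd_add {f g : Pt → ℝ} {p : Pt} (hf : DifferentiableAt ℝ f p)
    (hg : DifferentiableAt ℝ g p) (μ : Fin 4) :
    pd μ (fun q => f q + g q) p = pd μ f p + pd μ g p := by
  simp [pd, fderiv_fun_add hf hg]

lemma pd_mul {f g : Pt → ℝ} {p : Pt} (hf : DifferentiableAt ℝ f p)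
    (hg : DifferentiableAt ℝ g p) (μ : Fin 4) :
    pd μ (fun q => f q * g q) p = pd μ f p * g p + f p * pd μ g p := by
  simp only [pd, fderiv_fun_mul hf hg, ContinuousLinearMap.add_apply,
    ContinuousLinearMap.coe_smul', Pi.smul_apply, smul_eq_mul]
  ring

lemma pd_const_mul {f : Pt → ℝ} {p : Pt} (hf : DifferentiableAt ℝ f p) (a : ℝ) (μ : Fin 4) :
    pd μ (fun q => a * f q) p = a * pd μ f p := by
  rw [pd, pd, fderiv_const_mul hf a]
  simp [mul_comm]

lemma pd_mul_const {f : Pt → ℝ} {p : Pt} (hf : DifferentiableAt ℝ f p) (a : ℝ) (μ : Fin 4) :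
    pd μ (fun q => f q * a) p = pd μ f p * a := by
  rw [pd, pd, fderiv_mul_const hf a]
  simp only [ContinuousLinearMap.coe_smul', Pi.smul_apply, smul_eq_mul]
  exact mul_comm _ _

lemma pd_neg {f : Pt → ℝ} {p : Pt} (μ : Fin 4) :
    pd μ (fun q => -f q) p = -pd μ f p := by
  simp [pd, fderiv_neg]

lemma pd_inv {f : Pt → ℝ} {p : Pt} (hf : DifferentiableAt ℝ f p) (h0 : f p ≠ 0) (μ : Fin 4) :
    pd μ (fun q => (f q)⁻¹) p = -(pd μ f p) / f p ^ 2 := by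
  have hcomp : fderiv ℝ (fun q => (f q)⁻¹) p
      = (fderiv ℝ (fun x : ℝ => x⁻¹) (f p)).comp (fderiv ℝ f p) :=
    fderiv_comp p (differentiableAt_inv h0) hf
  rw [pd, hcomp, fderiv_inv]
  simp only [ContinuousLinearMap.coe_comp', Function.comp_apply,
    ContinuousLinearMap.smulRight_apply, ContinuousLinearMap.one_apply, smul_eq_mul, pd,
    ContinuousLinearMap.toSpanSingleton_apply]
  ring

lemma pd_sq1 (σ : Fin 4) (p : Pt) :
    pd σ (fun q : Pt => q 1 * q 1) p = if (1 : Fin 4) = σ then 2 * p 1 else 0 := by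
  rw [pd_mul (diff_coord 1 p) (diff_coord 1 p), pd_coord]
  split_ifs <;> ring

lemma pd_m00 (b : ℝ) (σ : Fin 4) (p : Pt) :
    pd σ (fun q : Pt => q 1 ^ 2 / b) p = if (1 : Fin 4) = σ then 2 * p 1 / b else 0 := by
  have h : (fun q : Pt => q 1 ^ 2 / b) = fun q : Pt => (q 1 * q 1) * b⁻¹ := by
    funext q; rw [pow_two, div_eq_mul_inv]
  rw [h, pd_mul_const ((diff_coord 1 p).fun_mul (diff_coord 1 p)) _ σ, pd_sq1]
  split_ifs <;> [rw [div_eq_mul_inv]; ring]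

lemma pd_m11 {b : ℝ} (hb : b ≠ 0) (σ : Fin 4) {p : Pt} (hp1 : p 1 ≠ 0) :
    pd σ (fun q : Pt => -(1 / (q 1 ^ 2 * b ^ 2))) p
      = if (1 : Fin 4) = σ then 2 / (p 1 ^ 3 * b ^ 2) else 0 := by
  have h : (fun q : Pt => -(1 / (q 1 ^ 2 * b ^ 2)))
      = fun q : Pt => -(((q 1 * q 1) * b ^ 2)⁻¹) := by
    funext q; rw [pow_two, one_div]
  have hdiff : DifferentiableAt ℝ (fun q : Pt => (q 1 * q 1) * b ^ 2) p :=
    ((diff_coord 1 p).mul (diff_coord 1 p)).mul_const _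
  have hne : (p 1 * p 1) * b ^ 2 ≠ 0 :=
    mul_ne_zero (mul_ne_zero hp1 hp1) (pow_ne_zero 2 hb)
  rw [h, pd_neg, pd_inv hdiff hne, pd_mul_const ((diff_coord 1 p).fun_mul (diff_coord 1 p)) _ σ,
    pd_sq1]
  split_ifs with hσ
  · field_simp
  · simp

lemma mem_nhds {p : Pt} (hp : p ∈ U) : U ∈ nhds p := openU.mem_nhds hp

lemma diffAt {f : Pt → ℝ} (hf : ContDiffOn ℝ (⊤ : ℕ∞) f U) {p : Pt} (hp : p ∈ U) :
    DifferentiableAt ℝ f p :=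
  (hf.contDiffAt (mem_nhds hp)).differentiableAt (by simp)

lemma contDiffOn_pd {f : Pt → ℝ} (hf : ContDiffOn ℝ (⊤ : ℕ∞) f U) (μ : Fin 4) :
    ContDiffOn ℝ (⊤ : ℕ∞) (pd μ f) U := by
  have h1 : ContDiffOn ℝ (⊤ : ℕ∞) (fderiv ℝ f) U := hf.fderiv_of_isOpen openU (by simp)
  exact h1.clm_apply contDiffOn_const

lemma pd_congr {f g : Pt → ℝ} (hfg : ∀ q ∈ U, f q = g q) {p : Pt} (hp : p ∈ U) (μ : Fin 4) :
    pd μ f p = pd μ g p := by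
  have h : f =ᶠ[nhds p] g := Filter.eventuallyEq_of_mem (mem_nhds hp) hfg
  rw [pd, pd, h.fderiv_eq]

lemma pd_comm {f : Pt → ℝ} (hf : ContDiffOn ℝ (⊤ : ℕ∞) f U) {p : Pt} (hp : p ∈ U) (μ ν : Fin 4) :
    pd μ (pd ν f) p = pd ν (pd μ f) p := by
  have hfp : ContDiffAt ℝ 2 f p := (hf.contDiffAt (mem_nhds hp)).of_le (WithTop.coe_le_coe.mpr le_top)
  have hsymm : IsSymmSndFDerivAt ℝ f p := hfp.isSymmSndFDerivAt (by simp [minSmoothness_of_isRCLikeNormedField])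
  have hd : DifferentiableAt ℝ (fderiv ℝ f) p :=
    (hfp.fderiv_right (m := 1) (by norm_num)).differentiableAt (by norm_num)
  have key : ∀ a b : Fin 4, pd a (pd b f) p
      = fderiv ℝ (fderiv ℝ f) p (Pi.single a 1) (Pi.single b 1) := by
    intro a b
    show fderiv ℝ (fun q => (fderiv ℝ f q) (Pi.single b 1)) p (Pi.single a 1)
        = fderiv ℝ (fderiv ℝ f) p (Pi.single a 1) (Pi.single b 1)
    rw [fderiv_clm_apply hd (differentiableAt_const _)]
    simp
  rw [key, key, hsymm]

end KimuraAux

open KimuraAux in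
/-- the Kimura metric admits no homothetic vector: if £_ξ g = c g on
{r>0, 0<θ<π} with b ≠ 0 constant, then c = 0 (ξ is a Killing vector). -/
theorem kimura_no_homothety (b : ℝ) (hb : b ≠ 0) (ξ : Vec) (c : ℝ)
    (hξ : ContDiffOn ℝ (⊤ : ℕ∞) ξ {p : Pt | 0 < p 1 ∧ 0 < p 2 ∧ p 2 < Real.pi})
    (h : ∀ p : Pt, 0 < p 1 → 0 < p 2 → p 2 < Real.pi → ∀ μ ν : Fin 4,
      lieDg ξ (kimura b) p μ ν = c * kimura b p μ ν) :
    c = 0 := by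
  have hξU : ContDiffOn ℝ (⊤ : ℕ∞) ξ U := hξ
  set u : Pt → ℝ := fun q => ξ q 0 with hu_def
  set v : Pt → ℝ := fun q => ξ q 1 with hv_def
  have hu : ContDiffOn ℝ (⊤ : ℕ∞) u U := contDiffOn_pi.mp hξU 0
  have hv : ContDiffOn ℝ (⊤ : ℕ∞) v U := contDiffOn_pi.mp hξU 1
  -- smoothness of iterated partials
  have hu0 : ContDiffOn ℝ (⊤ : ℕ∞) (pd 0 u) U := contDiffOn_pd hu 0
  have hu00 : ContDiffOn ℝ (⊤ : ℕ∞) (pd 0 (pd 0 u)) U := contDiffOn_pd hu0 0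
  have hu10 : ContDiffOn ℝ (⊤ : ℕ∞) (pd 1 (pd 0 u)) U := contDiffOn_pd hu0 1
  have hu1 : ContDiffOn ℝ (⊤ : ℕ∞) (pd 1 u) U := contDiffOn_pd hu 1
  have hu010 : ContDiffOn ℝ (⊤ : ℕ∞) (pd 0 (pd 1 (pd 0 u))) U := contDiffOn_pd hu10 0
  -- Step 1: extract the three component equations.
  -- HA : 2 r ξ¹ + 2 r² ∂ₜξ⁰ = c r²   (the (0,0) equation, times b)
  have HA : ∀ p ∈ U, 2 * (p 1 * v p) + 2 * ((p 1 * p 1) * pd 0 u p) = c * (p 1 * p 1) := by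
    intro p hp
    have hp1 : p 1 ≠ 0 := ne_of_gt hp.1
    have e := h p hp.1 hp.2.1 hp.2.2 0 0
    simp only [lieDg, Fin.sum_univ_four, kimura, Matrix.cons_val_zero, Matrix.cons_val_one,
      Matrix.head_cons, Matrix.cons_val_two, Matrix.tail_cons, Matrix.cons_val_three,
      Matrix.head_fin_const] at e
    rw [pd_m00 b 0, pd_m00 b 1, pd_m00 b 2, pd_m00 b 3] at e
    simp only [show ((1:Fin 4) = 0) = False by simp, show ((1:Fin 4) = 1) = True by simp,
      show ((1:Fin 4) = 2) = False by simp, show ((1:Fin 4) = 3) = False by simp,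
      if_true, if_false] at e
    field_simp at e
    linear_combination e
  -- HB : 2 r ∂ᵣξ¹ = 2 ξ¹ + c r   (the (1,1) equation)
  have HB : ∀ p ∈ U, 2 * (p 1 * pd 1 v p) = 2 * v p + c * p 1 := by
    intro p hp
    have hp1 : p 1 ≠ 0 := ne_of_gt hp.1
    have e := h p hp.1 hp.2.1 hp.2.2 1 1
    simp only [lieDg, Fin.sum_univ_four, kimura, Matrix.cons_val_zero, Matrix.cons_val_one,
      Matrix.head_cons, Matrix.cons_val_two, Matrix.tail_cons, Matrix.cons_val_three,
      Matrix.head_fin_const] at e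
    rw [pd_m11 hb 0 hp1, pd_m11 hb 1 hp1, pd_m11 hb 2 hp1, pd_m11 hb 3 hp1] at e
    simp only [show ((1:Fin 4) = 0) = False by simp, show ((1:Fin 4) = 1) = True by simp,
      show ((1:Fin 4) = 2) = False by simp, show ((1:Fin 4) = 3) = False by simp,
      if_true, if_false] at e
    field_simp at e
    have hK : (p 1 ^ 6 * b ^ 6) ≠ 0 := mul_ne_zero (pow_ne_zero _ hp1) (pow_ne_zero _ hb)
    have key : (p 1 ^ 6 * b ^ 6) * (2 * (p 1 * pd 1 v p))
        = (p 1 ^ 6 * b ^ 6) * (2 * v p + c * p 1) := by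
      linear_combination (-(p 1 ^ 6 * b ^ 6)) * e
    exact mul_left_cancel₀ hK key
  -- HC : ∂ₜξ¹ = b r⁴ ∂ᵣξ⁰   (the (0,1) equation)
  have HC : ∀ p ∈ U, pd 0 v p = b * ((p 1 * p 1) * (p 1 * p 1)) * pd 1 u p := by
    intro p hp
    have hp1 : p 1 ≠ 0 := ne_of_gt hp.1
    have e := h p hp.1 hp.2.1 hp.2.2 0 1
    simp only [lieDg, Fin.sum_univ_four, kimura, Matrix.cons_val_zero, Matrix.cons_val_one,
      Matrix.head_cons, Matrix.cons_val_two, Matrix.tail_cons, Matrix.cons_val_three,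
      Matrix.head_fin_const, pd_const] at e
    field_simp at e
    have hK : (p 1 ^ 2 * b ^ 2) ≠ 0 := mul_ne_zero (pow_ne_zero _ hp1) (pow_ne_zero _ hb)
    have key : (p 1 ^ 2 * b ^ 2) * (pd 0 v p)
        = (p 1 ^ 2 * b ^ 2) * (b * ((p 1 * p 1) * (p 1 * p 1)) * pd 1 u p) := by
      linear_combination (-(p 1 ^ 2 * b ^ 2)) * e
    exact mul_left_cancel₀ hK key
  -- Step 2: t-derivative of HA :  ∂ₜξ¹ = -r ∂ₜ²ξ⁰
  have H4 : ∀ p ∈ U, pd 0 v p = -(p 1 * pd 0 (pd 0 u) p) := by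
    intro p hp
    have hp1 : p 1 ≠ 0 := ne_of_gt hp.1
    have hdv := diffAt hv hp
    have hdu0 := diffAt hu0 hp
    have hd1 : DifferentiableAt ℝ (fun q : Pt => 2 * (q 1 * v q)) p :=
      ((diff_coord 1 p).mul hdv).const_mul 2
    have hd2 : DifferentiableAt ℝ (fun q : Pt => 2 * ((q 1 * q 1) * pd 0 u q)) p :=
      (((diff_coord 1 p).mul (diff_coord 1 p)).mul hdu0).const_mul 2
    have e := pd_congr (f := fun q => 2 * (q 1 * v q) + 2 * ((q 1 * q 1) * pd 0 u q))
      (g := fun q => c * (q 1 * q 1)) HA hp 0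
    rw [pd_add hd1 hd2, pd_const_mul ((diff_coord 1 p).fun_mul hdv) 2 0,
      pd_mul (diff_coord 1 p) hdv 0, pd_coord,
      pd_const_mul (((diff_coord 1 p).fun_mul (diff_coord 1 p)).fun_mul hdu0) 2 0,
      pd_mul ((diff_coord 1 p).fun_mul (diff_coord 1 p)) hdu0 0, pd_sq1,
      pd_const_mul ((diff_coord 1 p).fun_mul (diff_coord 1 p)) c 0, pd_sq1] at e
    simp only [show ((1:Fin 4) = 0) = False by simp, if_false] at e
    have key : p 1 * pd 0 v p = p 1 * -(p 1 * pd 0 (pd 0 u) p) := by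
      linear_combination e / 2
    exact mul_left_cancel₀ hp1 key
  -- Step 3: r-derivative of HA combined with HB :  2 r ∂ᵣ∂ₜξ⁰ = -c
  have H6 : ∀ p ∈ U, 2 * (p 1 * pd 1 (pd 0 u) p) = -c := by
    intro p hp
    have hp1 : p 1 ≠ 0 := ne_of_gt hp.1
    have hdv := diffAt hv hp
    have hdu0 := diffAt hu0 hp
    have hd1 : DifferentiableAt ℝ (fun q : Pt => 2 * (q 1 * v q)) p :=
      ((diff_coord 1 p).mul hdv).const_mul 2
    have hd2 : DifferentiableAt ℝ (fun q : Pt => 2 * ((q 1 * q 1) * pd 0 u q)) p :=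
      (((diff_coord 1 p).mul (diff_coord 1 p)).mul hdu0).const_mul 2
    have e := pd_congr (f := fun q => 2 * (q 1 * v q) + 2 * ((q 1 * q 1) * pd 0 u q))
      (g := fun q => c * (q 1 * q 1)) HA hp 1
    rw [pd_add hd1 hd2, pd_const_mul ((diff_coord 1 p).fun_mul hdv) 2 1,
      pd_mul (diff_coord 1 p) hdv 1, pd_coord,
      pd_const_mul (((diff_coord 1 p).fun_mul (diff_coord 1 p)).fun_mul hdu0) 2 1,
      pd_mul ((diff_coord 1 p).fun_mul (diff_coord 1 p)) hdu0 1, pd_sq1,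
      pd_const_mul ((diff_coord 1 p).fun_mul (diff_coord 1 p)) c 1, pd_sq1] at e
    simp only [show ((1:Fin 4) = 1) = True by simp, if_true] at e
    have hA := HA p hp
    have hB := HB p hp
    have key : p 1 ^ 2 * (2 * (p 1 * pd 1 (pd 0 u) p)) = p 1 ^ 2 * (-c) := by
      linear_combination p 1 * e - p 1 * hB - 2 * hA
    exact mul_left_cancel₀ (pow_ne_zero 2 hp1) key
  -- Step 4: combine HC and H4 :  b r³ ∂ᵣξ⁰ = -∂ₜ²ξ⁰
  have H7 : ∀ p ∈ U, b * ((p 1 * (p 1 * p 1)) * pd 1 u p) = -(pd 0 (pd 0 u) p) := by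
    intro p hp
    have hp1 : p 1 ≠ 0 := ne_of_gt hp.1
    have hC := HC p hp
    have h4 := H4 p hp
    have key : p 1 * (b * ((p 1 * (p 1 * p 1)) * pd 1 u p)) = p 1 * -(pd 0 (pd 0 u) p) := by
      linear_combination h4 - hC
    exact mul_left_cancel₀ hp1 key
  -- Step 5: t-derivative of H7, Schwarz, and H6 :  2 ∂ₜ³ξ⁰ = b c r²
  have H9 : ∀ p ∈ U, 2 * pd 0 (pd 0 (pd 0 u)) p = b * c * (p 1 * p 1) := by
    intro p hp
    have hp1 : p 1 ≠ 0 := ne_of_gt hp.1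
    have hdu1 := diffAt hu1 hp
    have hdu00 := diffAt hu00 hp
    have hd1 : DifferentiableAt ℝ (fun q : Pt => (q 1 * (q 1 * q 1)) * pd 1 u q) p :=
      ((diff_coord 1 p).mul ((diff_coord 1 p).mul (diff_coord 1 p))).mul hdu1
    have e := pd_congr (f := fun q => b * ((q 1 * (q 1 * q 1)) * pd 1 u q))
      (g := fun q => -(pd 0 (pd 0 u) q)) H7 hp 0
    rw [pd_const_mul hd1 b 0,
      pd_mul ((diff_coord 1 p).fun_mul ((diff_coord 1 p).fun_mul (diff_coord 1 p))) hdu1 0,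
      pd_mul (diff_coord 1 p) ((diff_coord 1 p).fun_mul (diff_coord 1 p)) 0, pd_coord, pd_sq1,
      pd_neg 0, pd_comm hu hp 0 1] at e
    simp only [show ((1:Fin 4) = 0) = False by simp, if_false] at e
    have h6 := H6 p hp
    linear_combination 2 * e - (b * (p 1 * p 1)) * h6
  -- Step 6: t-derivative of H6 :  ∂ₜ∂ᵣ∂ₜξ⁰ = 0 on U
  have H11 : ∀ p ∈ U, pd 0 (pd 1 (pd 0 u)) p = 0 := by
    intro p hp
    have hp1 : p 1 ≠ 0 := ne_of_gt hp.1
    have hdu10 := diffAt hu10 hp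
    have hd1 : DifferentiableAt ℝ (fun q : Pt => q 1 * pd 1 (pd 0 u) q) p :=
      (diff_coord 1 p).mul hdu10
    have e := pd_congr (f := fun q => 2 * (q 1 * pd 1 (pd 0 u) q))
      (g := fun _ => -c) H6 hp 0
    rw [pd_const_mul hd1 2 0, pd_mul (diff_coord 1 p) hdu10 0, pd_coord, pd_const] at e
    simp only [show ((1:Fin 4) = 0) = False by simp, if_false] at e
    have key : (2 * p 1) * pd 0 (pd 1 (pd 0 u)) p = (2 * p 1) * 0 := by
      linear_combination e
    exact mul_left_cancel₀ (by simpa using hp1) key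
  -- Step 7: evaluate everything at a fixed point.
  set p0 : Pt := ![0, 1, 1, 0] with hp0_def
  have hp0 : p0 ∈ U := by
    refine ⟨by norm_num [hp0_def], by show (0:ℝ) < 1; norm_num, ?_⟩
    have := Real.pi_gt_three
    simp only [hp0_def]
    show (1:ℝ) < Real.pi
    linarith
  have hp01 : p0 1 = 1 := by norm_num [hp0_def]
  -- r-derivative of H9 at p0
  have hdu000 : DifferentiableAt ℝ (pd 0 (pd 0 (pd 0 u))) p0 :=
    diffAt (contDiffOn_pd hu00 0) hp0
  have e10 : 2 * pd 1 (pd 0 (pd 0 (pd 0 u))) p0 = b * c * (2 * p0 1) := by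
    have e := pd_congr (f := fun q => 2 * pd 0 (pd 0 (pd 0 u)) q)
      (g := fun q => b * c * (q 1 * q 1)) H9 hp0 1
    rw [pd_const_mul hdu000 2 1,
      pd_const_mul ((diff_coord 1 p0).fun_mul (diff_coord 1 p0)) (b * c) 1, pd_sq1] at e
    simp only [show ((1:Fin 4) = 1) = True by simp, if_true] at e
    linarith [e]
  -- t-derivative of H11 at p0
  have e12 : pd 0 (pd 0 (pd 1 (pd 0 u))) p0 = 0 := by
    have e := pd_congr (f := fun q => pd 0 (pd 1 (pd 0 u)) q)
      (g := fun _ => (0 : ℝ)) H11 hp0 0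
    rw [pd_const] at e
    exact e
  -- Schwarz swaps: ∂ᵣ∂ₜ³ξ⁰ = ∂ₜ∂ₜ∂ᵣ∂ₜξ⁰
  have swap1 : pd 1 (pd 0 (pd 0 (pd 0 u))) p0 = pd 0 (pd 1 (pd 0 (pd 0 u))) p0 :=
    pd_comm hu00 hp0 1 0
  have swap2 : pd 0 (pd 1 (pd 0 (pd 0 u))) p0 = pd 0 (pd 0 (pd 1 (pd 0 u))) p0 :=
    pd_congr (f := fun q => pd 1 (pd 0 (pd 0 u)) q) (g := fun q => pd 0 (pd 1 (pd 0 u)) q)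
      (fun q hq => pd_comm hu0 hq 1 0) hp0 0
  have final : b * c * (2 * p0 1) = 0 := by
    rw [← e10, swap1, swap2, e12]
    ring
  rw [hp01] at final
  have : b * c * 2 = 0 := by linarith
  rcases mul_eq_zero.mp (by linarith : b * c = 0) with hb0 | hc0
  · exact absurd hb0 hb
  · exact hc0

end
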